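/- Let f : ℝ → ℝ be continuous, non-negative, not identically zero on [0,∞), with lim_{t→0⁺} f(t)/t = 0 and lim_{t→+∞} f(t)/t = 0, and F(t) = ∫₀ᵗ f(z)dz. Then the set S := {t > 0 : F(t) > 0} is nonempty and the infimum inf_{t ∈ S} t²/F(t) is attained at some t₀ > 0 and is strictly positive. -/
import Mathlib


open Filter MeasureTheory intervalIntegral

theorem stmt_18 (f : ℝ → ℝ) (hf : Continuous f)
    (hpos : ∀ t : ℝ, 0 ≤ t → 0 ≤ f t)
    (hnz : ∃ t : ℝ, 0 ≤ t ∧ f t ≠ 0)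
    (h0 : Tendsto (fun t => f t / t) (nhdsWithin 0 (Set.Ioi 0)) (nhds 0))
    (hinf : Tendsto (fun t => f t / t) atTop (nhds 0))
    (F : ℝ → ℝ) (hF : ∀ t, F t = ∫ z in (0:ℝ)..t, f z)
    (S : Set ℝ) (hS : S = {t : ℝ | 0 < t ∧ 0 < F t}) :
    S.Nonempty ∧ ∃ t₀ ∈ S, (∀ t ∈ S, t₀ ^ 2 / F t₀ ≤ t ^ 2 / F t) ∧
      0 < t₀ ^ 2 / F t₀ := by
  have hint : ∀ a b : ℝ, IntervalIntegrable f volume a b := fun a b => hf.intervalIntegrable a b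
  have hFc : Continuous F := by
    have h := intervalIntegral.continuous_primitive hint 0
    have : F = fun b => ∫ z in (0:ℝ)..b, f z := funext hF
    rw [this]; exact h
  have hFadd : ∀ s t : ℝ, F s + (∫ z in s..t, f z) = F t := by
    intro s t; rw [hF, hF]; exact integral_add_adjacent_intervals (hint 0 s) (hint s t)
  have hF0 : ∀ t : ℝ, 0 ≤ t → 0 ≤ F t := by
    intro t ht; rw [hF]
    exact intervalIntegral.integral_nonneg ht (fun u hu => hpos u hu.1)
  -- nonemptiness of S
  obtain ⟨a, ha0, hfa⟩ := hnz
  have hfa' : 0 < f a := (hpos a ha0).lt_of_ne (Ne.symm hfa)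
  have hev : ∀ᶠ x in nhds a, 0 < f x := (hf.tendsto a).eventually (eventually_gt_nhds hfa')
  obtain ⟨ε, hε, hball⟩ := Metric.eventually_nhds_iff.mp hev
  have hab : a < a + ε / 2 := by linarith
  have hposOn : ∀ x ∈ Set.Ioo a (a + ε / 2), 0 < f x := by
    intro x hx
    apply hball
    rw [Real.dist_eq, abs_lt]
    constructor
    · linarith [hx.1]
    · linarith [hx.2]
  have hI : 0 < ∫ z in a..(a + ε / 2), f z :=
    intervalIntegral_pos_of_pos_on (hint a (a + ε / 2)) hposOn hab
  have hFb : 0 < F (a + ε / 2) := by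
    have h1 := hFadd a (a + ε / 2)
    have h2 : 0 ≤ F a := hF0 a ha0
    linarith
  have hbS : (a + ε / 2) ∈ S := by
    rw [hS]; exact ⟨lt_of_le_of_lt ha0 hab, hFb⟩
  -- f 0 = 0
  have hf00 : f 0 = 0 := by
    have h1 : Tendsto f (nhdsWithin 0 (Set.Ioi 0)) (nhds (f 0)) :=
      (hf.tendsto 0).mono_left nhdsWithin_le_nhds
    have h2 : Tendsto f (nhdsWithin 0 (Set.Ioi 0)) (nhds 0) := by
      have hmul : Tendsto (fun t => f t / t * t) (nhdsWithin 0 (Set.Ioi 0)) (nhds 0) := by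
        have hid : Tendsto (fun t : ℝ => t) (nhdsWithin 0 (Set.Ioi 0)) (nhds 0) :=
          tendsto_id.mono_left nhdsWithin_le_nhds
        simpa using h0.mul hid
      apply hmul.congr'
      filter_upwards [self_mem_nhdsWithin] with t ht
      rw [div_mul_cancel₀]
      exact ne_of_gt ht
    exact tendsto_nhds_unique h1 h2
  -- small-t estimate
  have hsmall : ∀ e : ℝ, 0 < e → ∃ δ > 0, ∀ t : ℝ, 0 < t → t ≤ δ → F t ≤ e * t ^ 2 := by
    intro e he
    have h1 : ∀ᶠ x in nhdsWithin 0 (Set.Ioi 0), f x / x < e := h0.eventually (eventually_lt_nhds he)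
    rw [Metric.nhdsWithin_basis_ball.eventually_iff] at h1
    obtain ⟨δ, hδ, hb⟩ := h1
    refine ⟨δ / 2, by linarith, ?_⟩
    intro t ht htδ
    have hbound : ∀ x ∈ Set.Icc 0 t, f x ≤ e * x := by
      intro x hx
      rcases eq_or_lt_of_le hx.1 with h | h
      · simp [← h, hf00]
      · have hxδ : f x / x < e := by
          apply hb
          refine ⟨?_, h⟩
          simp only [Metric.mem_ball, Real.dist_eq, sub_zero, abs_of_pos h]
          linarith [hx.2]
        rw [div_lt_iff₀ h] at hxδ
        linarith
    calc F t = ∫ z in (0:ℝ)..t, f z := hF t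
      _ ≤ ∫ z in (0:ℝ)..t, e * z :=
          integral_mono_on ht.le (hint 0 t)
            ((continuous_const.mul continuous_id).intervalIntegrable 0 t) hbound
      _ = e * ((t ^ 2 - 0 ^ 2) / 2) := by
          rw [intervalIntegral.integral_const_mul, integral_id]
      _ ≤ e * t ^ 2 := by nlinarith [sq_nonneg t]
  -- large-t estimate
  have hbig : ∀ M : ℝ, 0 < M → ∃ B : ℝ, 0 < B ∧ ∀ t : ℝ, B < t → M * F t < t ^ 2 := by
    intro M hM
    have h1 : ∀ᶠ t in atTop, f t / t < 1 / (2 * M) :=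
      hinf.eventually (eventually_lt_nhds (by positivity))
    obtain ⟨T₀, hT₀⟩ := eventually_atTop.mp h1
    set T : ℝ := max T₀ 1 with hTdef
    have hT1 : (1 : ℝ) ≤ T := le_max_right _ _
    have hfT : ∀ t : ℝ, T ≤ t → f t ≤ 1 / (2 * M) * t := by
      intro t ht
      have h2 := hT₀ t (le_trans (le_max_left _ _) ht)
      have ht0 : 0 < t := lt_of_lt_of_le (by linarith) ht
      rw [div_lt_iff₀ ht0] at h2
      linarith
    refine ⟨max T (2 * M * F T + 1), lt_of_lt_of_le zero_lt_one (le_trans hT1 (le_max_left _ _)), ?_⟩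
    intro t ht
    have htT : T ≤ t := le_trans (le_max_left _ _) ht.le
    have ht1 : (1 : ℝ) < t := lt_of_le_of_lt hT1 (lt_of_le_of_lt (le_max_left _ _) ht)
    have ht2 : 2 * M * F T + 1 < t := lt_of_le_of_lt (le_max_right _ _) ht
    have hIle : (∫ z in T..t, f z) ≤ ∫ z in T..t, 1 / (2 * M) * z :=
      integral_mono_on htT (hint T t)
        ((continuous_const.mul continuous_id).intervalIntegrable T t)
        (fun x hx => hfT x hx.1)
    have hcalc : (∫ z in T..t, 1 / (2 * M) * z) = 1 / (2 * M) * ((t ^ 2 - T ^ 2) / 2) := by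
      rw [intervalIntegral.integral_const_mul, integral_id]
    have hMI : M * (∫ z in T..t, f z) ≤ (t ^ 2 - T ^ 2) / 4 := by
      have h3 : M * (∫ z in T..t, f z) ≤ M * (1 / (2 * M) * ((t ^ 2 - T ^ 2) / 2)) := by
        apply mul_le_mul_of_nonneg_left _ hM.le
        rw [← hcalc]; exact hIle
      have h4 : M * (1 / (2 * M) * ((t ^ 2 - T ^ 2) / 2)) = (t ^ 2 - T ^ 2) / 4 := by
        field_simp; ring
      linarith
    have hkey := hFadd T t
    have hFT0 : 0 ≤ F T := hF0 T (by linarith)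
    nlinarith [sq_nonneg T, sq_nonneg (t - 1)]
  -- set up the minimization
  set t₁ : ℝ := a + ε / 2 with ht₁def
  have ht₁0 : 0 < t₁ := lt_of_le_of_lt ha0 hab
  set M : ℝ := t₁ ^ 2 / F t₁ with hMdef
  have hM : 0 < M := div_pos (pow_pos ht₁0 2) hFb
  obtain ⟨δ, hδ, hδs⟩ := hsmall (1 / (2 * M)) (by positivity)
  obtain ⟨B, hB, hBs⟩ := hbig M hM
  have hlow : ∀ t : ℝ, 0 < t → t ^ 2 ≤ M * F t → δ ≤ t := by
    intro t ht0 hle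
    by_contra h
    push_neg at h
    have h1 : F t ≤ 1 / (2 * M) * t ^ 2 := hδs t ht0 h.le
    have h2 : M * F t ≤ M * (1 / (2 * M) * t ^ 2) := mul_le_mul_of_nonneg_left h1 hM.le
    have h3 : M * (1 / (2 * M) * t ^ 2) = t ^ 2 / 2 := by field_simp
    nlinarith [pow_pos ht0 2]
  have hhigh : ∀ t : ℝ, t ^ 2 ≤ M * F t → t ≤ B := by
    intro t h1
    by_contra h
    push_neg at h
    exact absurd h1 (not_le.2 (hBs t h))
  set K : Set ℝ := Set.Icc δ B ∩ {t : ℝ | t ^ 2 ≤ M * F t} with hKdef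
  have hKc : IsCompact K :=
    isCompact_Icc.inter_right (isClosed_le (continuous_pow 2) (continuous_const.mul hFc))
  have hKF : ∀ t ∈ K, 0 < F t := by
    intro t ht
    have ht0 : 0 < t := lt_of_lt_of_le hδ ht.1.1
    have h1 : (0 : ℝ) < t ^ 2 := pow_pos ht0 2
    have h2 : t ^ 2 ≤ M * F t := ht.2
    nlinarith
  have hKS : ∀ t ∈ K, t ∈ S := by
    intro t ht
    rw [hS]
    exact ⟨lt_of_lt_of_le hδ ht.1.1, hKF t ht⟩
  have ht₁eq : t₁ ^ 2 = M * F t₁ := by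
    rw [hMdef, div_mul_cancel₀]
    exact ne_of_gt hFb
  have ht₁K : t₁ ∈ K := by
    refine ⟨⟨hlow t₁ ht₁0 ht₁eq.le, hhigh t₁ ht₁eq.le⟩, ht₁eq.le⟩
  obtain ⟨t₀, ht₀K, hmin⟩ :=
    hKc.exists_isMinOn ⟨t₁, ht₁K⟩
      (ContinuousOn.div ((continuous_pow 2).continuousOn) hFc.continuousOn
        (fun t ht => ne_of_gt (hKF t ht)))
  have ht₀0 : 0 < t₀ := lt_of_lt_of_le hδ ht₀K.1.1
  have ht₀F : 0 < F t₀ := hKF t₀ ht₀K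
  refine ⟨⟨t₁, hbS⟩, t₀, hKS t₀ ht₀K, ?_, div_pos (pow_pos ht₀0 2) ht₀F⟩
  intro t htS
  rw [hS] at htS
  obtain ⟨ht0, htF⟩ := htS
  by_cases h : t ^ 2 ≤ M * F t
  · exact hmin ⟨⟨hlow t ht0 h, hhigh t h⟩, h⟩
  · push_neg at h
    have h1 : M < t ^ 2 / F t := (lt_div_iff₀ htF).2 (by linarith)
    have h2 : t₀ ^ 2 / F t₀ ≤ t₁ ^ 2 / F t₁ := hmin ht₁K
    rw [← hMdef] at h2
    linarith
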